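/- Let A be an alternating Büchi automaton, ≼_F a reflexive and transitive forward simulation on A such that A is ≼_F-unambiguous, ≼_B a reflexive and transitive backward simulation on A parametrised by ≼_F, and ≼_M a mediated preorder induced by ≼_F and ≼_B. Let T be a partial run of A on a word w with an extension function ext, and let V be a partial run of A on w with T ≼_w-ext V but not T ≼_ext V, and let τ_V ∈ V ∪ {ε} with τ_V ∉ branches(sw_T(V)). Then there exist a partial run W of A on w with T ≼_w-ext W and a path τ_W ∈ W with τ_W ∉ branches(sw_T(W)) such that root(V) ≼_B root(W) and ⟨τ_V, sw_T(V)⟩ ⊏ ⟨τ_W, sw_T(W)⟩. -/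

import Mathlib

/-- An alternating Büchi automaton over alphabet `σ` with states `Q`:
initial state `ι`, transition function `δ` (where `P ∈ δ q a` means `q →a P`),
and accepting states `α`. -/
structure ABA (σ Q : Type*) where
  ι : Q
  δ : Q → σ → Set (Set Q)
  α : Set Q

variable {σ Q : Type*}

/-- The assumption `∅ ∉ δ(q, a)` for all `q, a`. -/
def ABA.NoEmpty (A : ABA σ Q) : Prop := ∀ q a, ∅ ∉ A.δ q a

/-- The set of successors of a path `π` in a tree `T ⊆ Q⁺`. -/
def succs (T : Set (List Q)) (π : List Q) : Set Q := {q | π ++ [q] ∈ T}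

/-- A tree over `Q`: a set of nonempty finite words over `Q`, closed under nonempty
prefixes and containing exactly one word of length one (its root). -/
structure IsTree (T : Set (List Q)) : Prop where
  not_nil : [] ∉ T
  prefix_closed : ∀ π ∈ T, ∀ ρ : List Q, ρ <+: π → ρ ≠ [] → ρ ∈ T
  root : ∃! q : Q, [q] ∈ T

/-- The last state of a path (`A.ι` as a dummy for the empty path). -/
def lastSt (A : ABA σ Q) (π : List Q) : Q := π.getLastD A.ι

/-- A partial run of `A` on `w`: a finite tree in which every path either has no
successors or takes a transition of `A` on the appropriate letter of `w`. -/
structure IsPartialRun (A : ABA σ Q) (w : ℕ → σ) (T : Set (List Q)) : Prop where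
  tree : IsTree T
  finite : T.Finite
  step : ∀ π ∈ T, succs T π = ∅ ∨ succs T π ∈ A.δ (lastSt A π) (w (π.length - 1))

/-- A run of `A` on `w`. -/
structure IsRun (A : ABA σ Q) (w : ℕ → σ) (T : Set (List Q)) : Prop where
  tree : IsTree T
  step : ∀ π ∈ T, succs T π ∈ A.δ (lastSt A π) (w (π.length - 1))

/-- A (finite, maximal) branch of a tree. -/
def IsBranch (T : Set (List Q)) (π : List Q) : Prop := π ∈ T ∧ succs T π = ∅

/-- An infinite branch of a tree: all its nonempty finite prefixes belong to the tree. -/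
def InfBranch (T : Set (List Q)) (ξ : ℕ → Q) : Prop :=
  ∀ n : ℕ, (List.ofFn fun i : Fin (n + 1) => ξ i) ∈ T

/-- A run is accepting iff every infinite branch contains infinitely many accepting
states. -/
def Accepting (A : ABA σ Q) (T : Set (List Q)) : Prop :=
  ∀ ξ : ℕ → Q, InfBranch T ξ → ∀ n : ℕ, ∃ m ≥ n, ξ m ∈ A.α

/-- The language of `A`: the infinite words having an accepting run rooted at `ι`. -/
def ABA.Lang (A : ABA σ Q) : Set (ℕ → σ) :=
  {w | ∃ T : Set (List Q), IsRun A w T ∧ [A.ι] ∈ T ∧ Accepting A T}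

/-- `p ≼_α r` : `p ∈ α ⇒ r ∈ α`. -/
def αle (A : ABA σ Q) (p r : Q) : Prop := p ∈ A.α → r ∈ A.α

/-- A forward simulation on `A`. -/
def ForwardSim (A : ABA σ Q) (F : Q → Q → Prop) : Prop :=
  ∀ p r, F p r → (p ∈ A.α → r ∈ A.α) ∧
    ∀ a P, P ∈ A.δ p a → ∃ R ∈ A.δ r a, ∀ r' ∈ R, ∃ p' ∈ P, F p' r'

/-- A backward simulation on `A` parametrised by the forward simulation `F`. -/
def BackwardSim (A : ABA σ Q) (F B : Q → Q → Prop) : Prop :=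
  ∀ p r, B p r → (p = A.ι → r = A.ι) ∧ (p ∈ A.α → r ∈ A.α) ∧
    ∀ a q P, p ∉ P → insert p P ∈ A.δ q a →
      ∃ s R, r ∉ R ∧ insert r R ∈ A.δ s a ∧ B q s ∧ ∀ y ∈ R, ∃ x ∈ P, F x y

/-- `A` is `≼_F`-unambiguous: no transition has two distinct forward-equivalent states
on its right-hand side. -/
def Unambiguous (A : ABA σ Q) (F : Q → Q → Prop) : Prop :=
  ∀ p a P, P ∈ A.δ p a → ∀ q ∈ P, ∀ r ∈ P, q ≠ r → ¬ (F q r ∧ F r q)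

/-- `M` is a mediated preorder induced by the forward simulation `F` and the backward
simulation `B`: a preorder containing `F`, contained in `F ∘ B⁻¹` (existence of a
mediator), and forward extensible. -/
structure IsMediated (F B M : Q → Q → Prop) : Prop where
  refl : Reflexive M
  trans : Transitive M
  le_f : ∀ q r, F q r → M q r
  mediator : ∀ q r, M q r → ∃ s, F q s ∧ B r s
  fwd_ext : ∀ q r s, M q r → F r s → M q s

/-- An extension function for the partial run `T`: it assigns to every branch `π` of `T`
a state `ext π ≼_M leaf(π)`. -/
def IsExtFun (A : ABA σ Q) (M : Q → Q → Prop) (T : Set (List Q))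
    (ext : List Q → Q) : Prop :=
  ∀ π, IsBranch T π → M (ext π) (lastSt A π)

/-- `π ≼_ext ψ` : `ψ` strongly covers `π` w.r.t. `ext`. -/
def BrExt (A : ABA σ Q) (F : Q → Q → Prop) (ext : List Q → Q) (π ψ : List Q) : Prop :=
  List.Forall₂ (αle A) π ψ ∧ F (ext π) (lastSt A ψ)

/-- `π ≼_w-ext ψ` : `ψ` weakly covers `π` w.r.t. `ext`. -/
def BrWExt (A : ABA σ Q) (M : Q → Q → Prop) (ext : List Q → Q) (π ψ : List Q) : Prop :=
  List.Forall₂ (αle A) π ψ ∧ M (ext π) (lastSt A ψ)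

/-- `T ≼_ext U` : `U` strongly covers `T` w.r.t. `ext` (every branch of `U` strongly
covers some branch of `T`, and the root of `U` backward simulates the root of `T`). -/
def TrExt (A : ABA σ Q) (F B : Q → Q → Prop) (ext : List Q → Q)
    (T U : Set (List Q)) : Prop :=
  (∀ ψ, IsBranch U ψ → ∃ π, IsBranch T π ∧ BrExt A F ext π ψ) ∧
  ∀ p r, [p] ∈ T → [r] ∈ U → B p r

/-- `T ≼_w-ext U` : `U` weakly covers `T` w.r.t. `ext`. -/
def TrWExt (A : ABA σ Q) (M B : Q → Q → Prop) (ext : List Q → Q)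
    (T U : Set (List Q)) : Prop :=
  (∀ ψ, IsBranch U ψ → ∃ π, IsBranch T π ∧ BrWExt A M ext π ψ) ∧
  ∀ p r, [p] ∈ T → [r] ∈ U → B p r

/-- `sw_T(V)` : the tree of all nonempty prefixes of the strict weakly covering branches
of `V` w.r.t. `T` and `ext` (branches of `V` strongly covering no branch of `T`). -/
def swT (A : ABA σ Q) (F : Q → Q → Prop) (ext : List Q → Q)
    (T V : Set (List Q)) : Set (List Q) :=
  {ρ | ρ ≠ [] ∧ ∃ ψ, IsBranch V ψ ∧ (¬ ∃ π, IsBranch T π ∧ BrExt A F ext π ψ) ∧ ρ <+: ψ}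

/-- `X ⊖_i τ` (for `1 ≤ i ≤ |τ|`, all successors allowed when `i = |τ|`): the union of
the branches of the suffix trees `X(τ^i q)` for successors `q ≠ τ_{i+1}` of `τ^i`. -/
def ominus (X : Set (List Q)) (τ : List Q) (i : ℕ) : Set (List Q) :=
  {χ | χ ≠ [] ∧ χ.head? ≠ τ[i]? ∧ τ.take i ++ χ ∈ X ∧ succs X (τ.take i ++ χ) = ∅}

/-- The tree decomposition `⟨τ, X⟩ = X ⊖_1 τ, …, X ⊖_{|τ|} τ`, with
`⟨ε, X⟩ = branches(X)`. -/
def seqOf (X : Set (List Q)) : List Q → List (Set (List Q))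
  | [] => [{π | IsBranch X π}]
  | τ@(_ :: _) => (List.range τ.length).map fun i => ominus X τ (i + 1)

/-- `P ≼_F^∀∃ P'` for sets of paths, compared componentwise. -/
def SetLe (F : Q → Q → Prop) (P P' : Set (List Q)) : Prop :=
  ∀ φ' ∈ P', ∃ φ ∈ P, List.Forall₂ F φ φ'

/-- `P ≺_F^∀∃ P'` : `P ≼_F^∀∃ P'` but not `P' ≼_F^∀∃ P`. -/
def SetLt (F : Q → Q → Prop) (P P' : Set (List Q)) : Prop :=
  SetLe F P P' ∧ ¬ SetLe F P' P

/-- `S ⊏ S'` for finite sequences of sets of paths. -/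
def SeqLt (F : Q → Q → Prop) (S S' : List (Set (List Q))) : Prop :=
  ∃ k < min S.length S'.length,
    SetLt F (S.getD k ∅) (S'.getD k ∅) ∧
    ∀ j < k, SetLe F (S.getD j ∅) (S'.getD j ∅)

/-!
Pick a strict branch `φ` of `V`, i.e. one strongly covering no branch of `T`. It weakly
covers some branch `π` of `T`; a mediator `s` with `ext π ≼_F s` and `leaf φ ≼_B s` lets the
backward simulation rebuild `φ` as a spine ending in `s`, which strongly covers `π`. The
side successors along the spine are forward simulated by siblings of `φ` in `V`, and the
subtrees below them are grafted by forward simulation. In the new run `W` every strict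
branch is then simulated by a strict branch of `V` leaving `φ` at the same depth.

If `φ` leaves `τ_V` as late as possible and has an `≼_F`-minimal tail, this makes
`⟨τ_V, sw_T(V)⟩ ⊏ ⟨spine, sw_T(W)⟩`, by unambiguity. For `τ_V = ε` the sequence has the single
component `branches(sw_T(V))`, and one needs `W ⊖₁ τ_W = ∅`: iterating the first case until
no strict branch is left terminates, because `⊏` is a strict order on the finitely many
decompositions of runs whose depth is bounded by that of `T`.
-/

theorem lastSt_append_singleton (A : ABA σ Q) (l : List Q) (q : Q) :
    lastSt A (l ++ [q]) = q :=
  List.getLastD_concat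

theorem lastSt_take_succ (A : ABA σ Q) {l : List Q} {i : ℕ} (hi : i < l.length) :
    lastSt A (l.take (i + 1)) = l[i] := by
  rw [List.take_succ_eq_append_getElem hi, lastSt_append_singleton]

theorem List.Forall₂.trans_of_transitive {r : Q → Q → Prop} (hr : Transitive r)
    {l₁ l₂ l₃ : List Q} (h₁₂ : List.Forall₂ r l₁ l₂) (h₂₃ : List.Forall₂ r l₂ l₃) :
    List.Forall₂ r l₁ l₃ := by
  induction h₂₃ generalizing l₁ with
  | nil => cases h₁₂; exact .nil
  | cons hbc _ ih => cases h₁₂ with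
    | cons hab htl => exact .cons (hr hab hbc) (ih htl)

theorem αle_trans (A : ABA σ Q) : Transitive (αle A) :=
  fun _ _ _ h₁ h₂ ha => h₂ (h₁ ha)

namespace IsTree

variable {X : Set (List Q)}

theorem ne_nil_of_mem (hX : IsTree X) {θ : List Q} (hθ : θ ∈ X) : θ ≠ [] :=
  fun h => hX.not_nil (h ▸ hθ)

theorem take_mem (hX : IsTree X) {θ : List Q} (hθ : θ ∈ X) {i : ℕ} (hi : 0 < i) :
    θ.take i ∈ X :=
  hX.prefix_closed θ hθ _ (List.take_prefix i θ) <| by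
    simpa [List.take_eq_nil_iff, hi.ne'] using hX.ne_nil_of_mem hθ

theorem take_one_eq (hX : IsTree X) {θ : List Q} (hθ : θ ∈ X) {r : Q} (hr : [r] ∈ X) :
    θ.take 1 = [r] := by
  obtain ⟨r₀, -, hu⟩ := hX.root
  obtain _ | ⟨a, t⟩ := θ
  · exact absurd hθ hX.not_nil
  · have ha : [a] ∈ X := hX.take_mem hθ one_pos
    simp [hu a ha, hu r hr]

theorem getElem_mem_succs (hX : IsTree X) {θ : List Q} (hθ : θ ∈ X) {i : ℕ}
    (hi : i < θ.length) : θ[i] ∈ succs X (θ.take i) := by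
  simpa [succs, ← List.take_succ_eq_append_getElem hi] using hX.take_mem hθ i.succ_pos

theorem eq_of_isBranch_of_prefix (hX : IsTree X) {φ θ : List Q} (hφ : IsBranch X φ)
    (hθ : θ ∈ X) (hφθ : φ <+: θ) : φ = θ := by
  by_contra hne
  have hlt : φ.length < θ.length :=
    lt_of_le_of_ne hφθ.length_le fun h => hne (hφθ.eq_of_length h)
  have hmem := hX.getElem_mem_succs hθ hlt
  rw [← List.prefix_iff_eq_take.mp hφθ, hφ.2] at hmem
  exact hmem

end IsTree

theorem exists_isBranch_of_finite {X : Set (List Q)} (hfin : X.Finite) {θ : List Q}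
    (hθ : θ ∈ X) : ∃ ψ, θ <+: ψ ∧ IsBranch X ψ := by
  obtain ⟨ψ, ⟨hψ, hθψ⟩, hmax⟩ := Set.Finite.exists_maximalFor List.length {ψ ∈ X | θ <+: ψ}
    (hfin.subset (Set.sep_subset _ _)) ⟨θ, hθ, List.prefix_rfl⟩
  refine ⟨ψ, hθψ, hψ, Set.eq_empty_of_forall_notMem fun y hy => ?_⟩
  have := hmax (j := ψ ++ [y]) ⟨hy, hθψ.trans (List.prefix_append _ _)⟩ (by simp)
  simp at this

theorem IsPartialRun.succs_mem_δ {A : ABA σ Q} {w : ℕ → σ} {V : Set (List Q)}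
    (hV : IsPartialRun A w V) {θ : List Q} (hθ : θ ∈ V) {q : Q} (hq : q ∈ succs V θ) :
    succs V θ ∈ A.δ (lastSt A θ) (w (θ.length - 1)) :=
  (hV.step θ hθ).resolve_left (Set.nonempty_of_mem hq).ne_empty

section StrictOrder

variable {F : Q → Q → Prop}

theorem setLe_refl (hFr : Reflexive F) (P : Set (List Q)) : SetLe F P P :=
  fun φ hφ => ⟨φ, hφ, List.forall₂_same.mpr fun x _ => hFr x⟩

theorem SetLe.trans (hFt : Transitive F) {P₁ P₂ P₃ : Set (List Q)} (h₁₂ : SetLe F P₁ P₂)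
    (h₂₃ : SetLe F P₂ P₃) : SetLe F P₁ P₃ := by
  intro φ₃ hφ₃
  obtain ⟨φ₂, hφ₂, h₂⟩ := h₂₃ φ₃ hφ₃
  obtain ⟨φ₁, hφ₁, h₁⟩ := h₁₂ φ₂ hφ₂
  exact ⟨φ₁, hφ₁, h₁.trans_of_transitive hFt h₂⟩

theorem SetLe.mono_left {P P' R : Set (List Q)} (hPP' : P ⊆ P') (h : SetLe F P R) :
    SetLe F P' R :=
  fun φ hφ => (h φ hφ).imp fun _ ⟨hmem, hrel⟩ => ⟨hPP' hmem, hrel⟩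

theorem SetLt.trans_setLe (hFt : Transitive F) {P₁ P₂ P₃ : Set (List Q)}
    (h₁₂ : SetLt F P₁ P₂) (h₂₃ : SetLe F P₂ P₃) : SetLt F P₁ P₃ :=
  ⟨h₁₂.1.trans hFt h₂₃, fun h => h₁₂.2 (h₂₃.trans hFt h)⟩

theorem SetLe.trans_setLt (hFt : Transitive F) {P₁ P₂ P₃ : Set (List Q)}
    (h₁₂ : SetLe F P₁ P₂) (h₂₃ : SetLt F P₂ P₃) : SetLt F P₁ P₃ :=
  ⟨h₁₂.trans hFt h₂₃.1, fun h => h₂₃.2 (h.trans hFt h₁₂)⟩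

theorem seqLt_irrefl (hFr : Reflexive F) (S : List (Set (List Q))) : ¬ SeqLt F S S :=
  fun ⟨_, _, hlt, _⟩ => hlt.2 (setLe_refl hFr _)

theorem SeqLt.trans (hFt : Transitive F) {S₁ S₂ S₃ : List (Set (List Q))}
    (h₁₂ : SeqLt F S₁ S₂) (h₂₃ : SeqLt F S₂ S₃) : SeqLt F S₁ S₃ := by
  obtain ⟨k, hk, hlt, hle⟩ := h₁₂
  obtain ⟨k', hk', hlt', hle'⟩ := h₂₃
  refine ⟨min k k', by omega, ?_, fun j hj => (hle j (by omega)).trans hFt (hle' j (by omega))⟩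
  rcases lt_trichotomy k k' with h | rfl | h
  · rw [min_eq_left h.le]
    exact hlt.trans_setLe hFt (hle' k h)
  · rw [min_self]
    exact hlt.trans_setLe hFt hlt'.1
  · rw [min_eq_right h.le]
    exact (hle k' h).trans_setLt hFt hlt'

end StrictOrder

theorem seqOf_length {X : Set (List Q)} {τ : List Q} (hτ : τ ≠ []) :
    (seqOf X τ).length = τ.length := by
  obtain _ | ⟨a, t⟩ := τ
  · exact absurd rfl hτ
  · simp [seqOf]

theorem seqOf_getD {X : Set (List Q)} {τ : List Q} (hτ : τ ≠ []) {j : ℕ} (hj : j < τ.length) :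
    (seqOf X τ).getD j ∅ = ominus X τ (j + 1) := by
  obtain _ | ⟨a, t⟩ := τ
  · exact absurd rfl hτ
  · show ((List.range (a :: t).length).map fun i => ominus X (a :: t) (i + 1)).getD j ∅ = _
    rw [List.getD_eq_getElem?_getD, List.getElem?_map, List.getElem?_range hj]
    rfl

theorem Set.Finite.exists_minimal_of_preorder {α : Type*} {r : α → α → Prop}
    (hr : Reflexive r) (ht : Transitive r) {s : Set α} (hs : s.Finite) (hne : s.Nonempty) :
    ∃ m ∈ s, ∀ x ∈ s, r x m → r m x := by
  let _ : Preorder α := { le := r, le_refl := hr, le_trans := fun _ _ _ h₁ h₂ => ht h₁ h₂ }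
  obtain ⟨m, hm⟩ := hs.exists_minimal hne
  exact ⟨m, hm.1, fun x hx => hm.2 hx⟩

section CommonPrefix

variable {α : Type*}

open Classical

noncomputable def commonPrefixLen (l l' : List α) : ℕ :=
  Nat.findGreatest (fun j => l.take j = l'.take j) (min l.length l'.length)

theorem take_commonPrefixLen (l l' : List α) :
    l.take (commonPrefixLen l l') = l'.take (commonPrefixLen l l') :=
  Nat.findGreatest_spec (P := fun j => l.take j = l'.take j) (Nat.zero_le _) (by simp)

theorem commonPrefixLen_le_left (l l' : List α) : commonPrefixLen l l' ≤ l.length :=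
  (Nat.findGreatest_le _).trans (min_le_left _ _)

theorem commonPrefixLen_le_right (l l' : List α) : commonPrefixLen l l' ≤ l'.length :=
  (Nat.findGreatest_le _).trans (min_le_right _ _)

theorem le_commonPrefixLen {l l' : List α} {j : ℕ} (hl : j ≤ l.length) (hl' : j ≤ l'.length)
    (h : l.take j = l'.take j) : j ≤ commonPrefixLen l l' :=
  Nat.le_findGreatest (le_min hl hl') h

theorem getElem?_commonPrefixLen_ne {l l' : List α} (h : commonPrefixLen l l' < l.length) :
    l[commonPrefixLen l l']? ≠ l'[commonPrefixLen l l']? := by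
  intro heq
  have hl' : commonPrefixLen l l' < l'.length := by
    by_contra hc
    rw [List.getElem?_eq_getElem h, List.getElem?_eq_none (l := l') (by omega)] at heq
    exact Option.some_ne_none _ heq
  have := le_commonPrefixLen (j := commonPrefixLen l l' + 1) h hl' <| by
    rw [List.take_succ, List.take_succ, take_commonPrefixLen, heq]
  omega

theorem commonPrefixLen_take_append {l u : List α} {a : ℕ} (ha : a ≤ l.length)
    (hu : u.head? ≠ l[a]?) : commonPrefixLen (l.take a ++ u) l = a := by
  have hlen : (l.take a).length = a := by simp [ha]
  refine le_antisymm ?_ (le_commonPrefixLen (by simp [hlen]) ha (by simp [List.take_left' hlen]))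
  by_contra! hlt
  have := congrArg (·[a]?) (take_commonPrefixLen (l.take a ++ u) l)
  simp only [List.getElem?_take, hlt, if_true] at this
  rw [List.getElem?_append_right hlen.le, hlen, Nat.sub_self, ← List.head?_eq_getElem?] at this
  exact hu this

end CommonPrefix

section StrictBranches

variable {A : ABA σ Q} {F : Q → Q → Prop} {ext : List Q → Q} {T V : Set (List Q)}

theorem swT_subset (hV : IsTree V) : swT A F ext T V ⊆ V :=
  fun ρ ⟨hne, ψ, hψ, _, hρψ⟩ => hV.prefix_closed ψ hψ.1 ρ hρψ hne

theorem isBranch_swT_iff (hV : IsTree V) {φ : List Q} :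
    IsBranch (swT A F ext T V) φ ↔
      IsBranch V φ ∧ ¬ ∃ π, IsBranch T π ∧ BrExt A F ext π φ := by
  constructor
  · rintro ⟨⟨-, ψ, hψ, hψs, hφψ⟩, hsucc⟩
    obtain rfl : φ = ψ := by
      obtain ⟨_ | ⟨r, rs⟩, rfl⟩ := hφψ
      · simp
      · have : r ∈ succs (swT A F ext T V) φ := ⟨by simp, _, hψ, hψs, rs, by simp⟩
        rw [hsucc] at this
        exact this.elim
    exact ⟨hψ, hψs⟩
  · rintro ⟨hφ, hφs⟩
    refine ⟨⟨hV.ne_nil_of_mem hφ.1, φ, hφ, hφs, List.prefix_rfl⟩,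
      Set.eq_empty_of_forall_notMem fun y ⟨_, ψ, hψ, _, hpre⟩ => ?_⟩
    have : y ∈ succs V φ := hV.prefix_closed ψ hψ.1 _ hpre (by simp)
    rw [hφ.2] at this
    exact this

theorem IsBranch.drop_mem_ominus_swT (hV : IsTree V) {τ : List Q} (hτ : τ ∈ V)
    (hτX : ¬ IsBranch (swT A F ext T V) τ) {φ : List Q} (hφ : IsBranch (swT A F ext T V) φ) :
    0 < commonPrefixLen φ τ ∧
      φ.drop (commonPrefixLen φ τ) ∈ ominus (swT A F ext T V) τ (commonPrefixLen φ τ) := by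
  set c := commonPrefixLen φ τ
  have hφV := ((isBranch_swT_iff hV).1 hφ).1
  have hφne := hV.ne_nil_of_mem hφV.1
  obtain ⟨r, hr, -⟩ := hV.root
  have hc : 0 < c := le_commonPrefixLen (List.length_pos_iff.2 hφne)
    (List.length_pos_iff.2 (hV.ne_nil_of_mem hτ))
    (by rw [hV.take_one_eq hφV.1 hr, hV.take_one_eq hτ hr])
  have htake : φ.take c = τ.take c := take_commonPrefixLen φ τ
  have hcφ : c < φ.length := by
    refine lt_of_le_of_ne (commonPrefixLen_le_left φ τ) fun hcφ => hτX ?_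
    have hφτ : φ = τ.take c := by rw [← htake, hcφ, List.take_length]
    exact hV.eq_of_isBranch_of_prefix hφV hτ (hφτ ▸ List.take_prefix _ _) ▸ hφ
  have hφ_eq : τ.take c ++ φ.drop c = φ := by
    rw [← htake, List.take_append_drop]
  refine ⟨hc, by simpa using hcφ, ?_, ?_⟩
  · rw [List.head?_drop]
    exact getElem?_commonPrefixLen_ne hcφ
  · rw [hφ_eq]
    exact hφ

end StrictBranches

section BackwardChain

variable {A : ABA σ Q} {w : ℕ → σ} {F B : Q → Q → Prop} {V : Set (List Q)}

theorem BackwardSim.exists_pred (hB : BackwardSim A F B) (hV : IsPartialRun A w V)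
    {θ : List Q} (hθ : θ ∈ V) {x r : Q} (hx : x ∈ succs V θ) (hxr : B x r) :
    ∃ s R, r ∉ R ∧ insert r R ∈ A.δ s (w (θ.length - 1)) ∧ B (lastSt A θ) s ∧
      ∀ y ∈ R, ∃ x' ∈ succs V θ, x' ≠ x ∧ F x' y := by
  have hδ : insert x (succs V θ \ {x}) ∈ A.δ (lastSt A θ) (w (θ.length - 1)) := by
    rw [Set.insert_diff_singleton, Set.insert_eq_self.mpr hx]
    exact hV.succs_mem_δ hθ hx
  obtain ⟨s, R, hrR, hsR, hBs, hcov⟩ := (hB x r hxr).2.2 _ _ _ (by simp) hδ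
  exact ⟨s, R, hrR, hsR, hBs, fun y hy => by simpa [and_assoc] using hcov y hy⟩

theorem BackwardSim.exists_chain (hB : BackwardSim A F B) (hV : IsPartialRun A w V)
    {φ : List Q} (hφ : φ ∈ V) (m : ℕ) (hm : m < φ.length) {s : Q} (hs : B φ[m] s) :
    ∃ (g : ℕ → Q) (R : ℕ → Set Q), g m = s ∧ (∀ i (hi : i ≤ m), B φ[i] (g i)) ∧
      ∀ j, 0 < j → ∀ hjm : j ≤ m,
        g j ∉ R j ∧ insert (g j) (R j) ∈ A.δ (g (j - 1)) (w (j - 1)) ∧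
        ∀ y ∈ R j, ∃ x ∈ succs V (φ.take j), x ≠ φ[j] ∧ F x y := by
  induction m generalizing s with
  | zero => exact ⟨fun _ => s, fun _ => ∅, rfl, fun i hi => by simpa [Nat.le_zero.1 hi] using hs,
      fun j hj hjm => by omega⟩
  | succ m ih =>
    have hθ := hV.tree.take_mem hφ m.succ_pos
    obtain ⟨s', R', hsR', hδ, hBs', hcov⟩ :=
      hB.exists_pred hV hθ (hV.tree.getElem_mem_succs hφ hm) hs
    rw [lastSt_take_succ A (by omega)] at hBs'
    obtain ⟨g, R, hgm, hgB, hgR⟩ := ih (by omega) hBs'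
    refine ⟨Function.update g (m + 1) s, Function.update R (m + 1) R', by simp, ?_, ?_⟩
    · intro i hi
      rcases hi.lt_or_eq with hi | rfl
      · simpa [Function.update_of_ne hi.ne] using hgB i (by omega)
      · simpa using hs
    · intro j hj hjm
      rcases hjm.lt_or_eq with hjm | rfl
      · simpa [Function.update_of_ne hjm.ne, Function.update_of_ne (show j - 1 ≠ m + 1 by omega)]
          using hgR j hj (by omega)
      · simp only [Function.update_self, Nat.add_sub_cancel,
          Function.update_of_ne (show m ≠ m + 1 by omega), hgm]
        simpa [List.length_take, Nat.min_eq_left (show m + 1 ≤ φ.length by omega)] using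
          And.intro hsR' (And.intro hδ hcov)

end BackwardChain

section Spine

def spine (g : ℕ → Q) (i : ℕ) : List Q := (List.range i).map g

variable (g : ℕ → Q)

@[simp] theorem length_spine (i : ℕ) : (spine g i).length = i := by simp [spine]

theorem spine_succ (i : ℕ) : spine g (i + 1) = spine g i ++ [g i] := by
  simp [spine, List.range_succ]

theorem take_spine (i j : ℕ) : (spine g i).take j = spine g (min j i) := by
  simp [spine, ← List.map_take, List.take_range]

theorem getElem?_spine {i j : ℕ} (h : j < i) : (spine g i)[j]? = some (g j) := by
  simp [spine, List.getElem?_range h]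

theorem lastSt_spine (A : ABA σ Q) {i : ℕ} (hi : 0 < i) : lastSt A (spine g i) = g (i - 1) := by
  obtain ⟨i, rfl⟩ := Nat.exists_eq_add_of_lt hi
  simp [spine_succ, lastSt_append_singleton]

theorem spine_injective : Function.Injective (spine g) := fun i j h => by
  simpa using congrArg List.length h

theorem eq_spine_of_spine_eq_append {i : ℕ} {θ : List Q} {q : Q}
    (h : spine g i = θ ++ [q]) : i = θ.length + 1 ∧ θ = spine g θ.length ∧ q = g θ.length := by
  obtain rfl : i = θ.length + 1 := by simpa using congrArg List.length h
  rw [spine_succ, List.append_singleton_inj] at h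
  exact ⟨rfl, h.1.symm, h.2.symm⟩

theorem forall₂_take_spine {r : Q → Q → Prop} {φ : List Q} {j : ℕ} (hj : j ≤ φ.length)
    (h : ∀ i (hi : i < φ.length), r φ[i] (g i)) : List.Forall₂ r (φ.take j) (spine g j) := by
  rw [List.forall₂_iff_get]
  refine ⟨by simp [hj], fun i h₁ h₂ => ?_⟩
  simpa [spine] using h i (by simp at h₁; omega)

end Spine

/-- The data of the surgery on `V` along its branch `φ`: a backward-simulation chain `g`
along `φ` whose side successors `R j` are forward simulated by siblings `sib j y` of `φ[j]`
in `V`, and for every pair of nodes a transition `fwd ρ θ` of `θ` forward simulating the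
successors of `ρ`, with `fwdPre ρ θ y` the successor of `ρ` that simulates `y`. -/
structure Surgery (A : ABA σ Q) (w : ℕ → σ) (F B : Q → Q → Prop) (V : Set (List Q))
    (φ : List Q) where
  g : ℕ → Q
  R : ℕ → Set Q
  sib : ℕ → Q → Q
  fwd : List Q → List Q → Set Q
  fwdPre : List Q → List Q → Q → Q
  B_g : ∀ i (hi : i < φ.length), B φ[i] (g i)
  g_notMem : ∀ j, 0 < j → j < φ.length → g j ∉ R j
  g_δ : ∀ j, 0 < j → j < φ.length → insert (g j) (R j) ∈ A.δ (g (j - 1)) (w (j - 1))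
  sib_spec : ∀ j, 0 < j → ∀ (hj : j < φ.length), ∀ y ∈ R j,
    sib j y ∈ succs V (φ.take j) ∧ sib j y ≠ φ[j] ∧ F (sib j y) y
  fwd_spec : ∀ ρ θ, succs V ρ ∈ A.δ (lastSt A ρ) (w (ρ.length - 1)) →
    F (lastSt A ρ) (lastSt A θ) → fwd ρ θ ∈ A.δ (lastSt A θ) (w (ρ.length - 1)) ∧
      ∀ y ∈ fwd ρ θ, fwdPre ρ θ y ∈ succs V ρ ∧ F (fwdPre ρ θ y) y
  fwd_eq_empty : ∀ ρ θ, ¬ (succs V ρ ∈ A.δ (lastSt A ρ) (w (ρ.length - 1)) ∧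
    F (lastSt A ρ) (lastSt A θ)) → fwd ρ θ = ∅

namespace Surgery

variable {A : ABA σ Q} {w : ℕ → σ} {F B : Q → Q → Prop} {V : Set (List Q)} {φ : List Q}
  (S : Surgery A w F B V φ)

theorem exists_of_chain (hF : ForwardSim A F) (hB : BackwardSim A F B)
    (hV : IsPartialRun A w V) (hφ : φ ∈ V) {s : Q} (hs : B (lastSt A φ) s) :
    ∃ S : Surgery A w F B V φ, S.g (φ.length - 1) = s := by
  classical
  have hn : 0 < φ.length := List.length_pos_iff.2 (hV.tree.ne_nil_of_mem hφ)
  rw [show φ = φ.take (φ.length - 1 + 1) by simp [Nat.sub_add_cancel hn],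
    lastSt_take_succ A (by omega)] at hs
  obtain ⟨g, R, hgs, hgB, hgR⟩ := hB.exists_chain hV hφ _ (by omega) hs
  have : Nonempty Q := ⟨A.ι⟩
  choose! sib hsib using fun j hj hjm => (hgR j hj hjm).2.2
  have hfwd : ∀ ρ θ : List Q, ∃ (P : Set Q) (pre : Q → Q),
      (succs V ρ ∈ A.δ (lastSt A ρ) (w (ρ.length - 1)) → F (lastSt A ρ) (lastSt A θ) →
        P ∈ A.δ (lastSt A θ) (w (ρ.length - 1)) ∧ ∀ y ∈ P, pre y ∈ succs V ρ ∧ F (pre y) y) ∧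
      (¬ (succs V ρ ∈ A.δ (lastSt A ρ) (w (ρ.length - 1)) ∧
        F (lastSt A ρ) (lastSt A θ)) → P = ∅) := by
    intro ρ θ
    by_cases h : succs V ρ ∈ A.δ (lastSt A ρ) (w (ρ.length - 1)) ∧ F (lastSt A ρ) (lastSt A θ)
    · obtain ⟨P, hP, hcov⟩ := (hF _ _ h.2).2 _ _ h.1
      choose! pre hpre using hcov
      exact ⟨P, pre, fun _ _ => ⟨hP, hpre⟩, fun h' => absurd h h'⟩
    · exact ⟨∅, id, fun h₁ h₂ => absurd ⟨h₁, h₂⟩ h, fun _ => rfl⟩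
  choose fwd fwdPre hfwd hfwd_empty using hfwd
  exact ⟨⟨g, R, sib, fwd, fwdPre, fun i hi => hgB i (by omega),
    fun j hj hjn => (hgR j hj (by omega)).1, fun j hj hjn => (hgR j hj (by omega)).2.1,
    fun j hj hjn => hsib j hj (by omega), hfwd, hfwd_empty⟩, hgs⟩

/-- `S.OffSpine ρ θ`: `θ` is a node of the new run off the spine, simulating the node `ρ`
of `V`. -/
inductive OffSpine : List Q → List Q → Prop
  | side (j : ℕ) (y : Q) (hj : 0 < j) (hjn : j < φ.length) (hy : y ∈ S.R j) :
      OffSpine (φ.take j ++ [S.sib j y]) (spine S.g j ++ [y])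
  | fwd (ρ θ : List Q) (y : Q) (h : OffSpine ρ θ) (hy : y ∈ S.fwd ρ θ) :
      OffSpine (ρ ++ [S.fwdPre ρ θ y]) (θ ++ [y])

variable {S}

theorem OffSpine.shape {ρ θ : List Q} (h : S.OffSpine ρ θ) :
    ρ ∈ V ∧ F (lastSt A ρ) (lastSt A θ) ∧
      ∃ j x y u v, ∃ (hj : 0 < j) (hjn : j < φ.length), ρ = φ.take j ++ x :: u ∧
        θ = spine S.g j ++ y :: v ∧ x ≠ φ[j] ∧ y ∈ S.R j ∧ List.Forall₂ F (x :: u) (y :: v) := by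
  induction h with
  | side j y hj hjn hy =>
    obtain ⟨hmem, hne, hF⟩ := S.sib_spec j hj hjn y hy
    refine ⟨hmem, by simpa [lastSt_append_singleton] using hF, j, _, y, [], [], hj, hjn, rfl, rfl,
      hne, hy, by simpa using hF⟩
  | fwd ρ θ y' h hy' ih =>
    obtain ⟨-, hFl, j, x, y, u, v, hj, hjn, hρ, hθ, hx, hy, hxy⟩ := ih
    have hcond : succs V ρ ∈ A.δ (lastSt A ρ) (w (ρ.length - 1)) := by
      by_contra hc
      rw [S.fwd_eq_empty _ _ fun h => hc h.1] at hy'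
      exact hy'
    obtain ⟨hmem, hF'⟩ := (S.fwd_spec _ _ hcond hFl).2 y' hy'
    refine ⟨hmem, by rwa [lastSt_append_singleton, lastSt_append_singleton], j, x, y,
      u ++ [S.fwdPre ρ θ y'], v ++ [y'], hj, hjn, by simp [hρ], by simp [hθ], hx, hy, ?_⟩
    simpa using List.rel_append hxy (List.forall₂_cons.2 ⟨hF', .nil⟩)

theorem OffSpine.length_eq {ρ θ : List Q} (h : S.OffSpine ρ θ) : ρ.length = θ.length := by
  obtain ⟨-, -, j, x, y, u, v, hj, hjn, rfl, rfl, -, -, hxy⟩ := h.shape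
  simp [hxy.length_eq, hjn.le]

theorem OffSpine.ne_spine {ρ θ : List Q} (h : S.OffSpine ρ θ) (i : ℕ) : θ ≠ spine S.g i := by
  obtain ⟨-, -, j, x, y, u, v, hj, hjn, -, rfl, -, hy, -⟩ := h.shape
  intro hi
  have hji : j < i := by
    have := congrArg List.length hi
    simp only [List.length_append, length_spine, List.length_cons] at this
    omega
  have := congrArg (·[j]?) hi
  simp only [getElem?_spine _ hji, List.getElem?_append_right (by simp : (spine S.g j).length ≤ j),
    length_spine, Nat.sub_self, List.getElem?_cons_zero, Option.some.injEq] at this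
  exact S.g_notMem j hj hjn (this ▸ hy)

theorem OffSpine.ne_nil {ρ θ : List Q} (h : S.OffSpine ρ θ) : θ ≠ [] := by
  cases h <;> simp

theorem offSpine_append_singleton_iff {ρ θ : List Q} {q : Q} :
    S.OffSpine ρ (θ ++ [q]) ↔
      (∃ j, 0 < j ∧ j < φ.length ∧ q ∈ S.R j ∧ θ = spine S.g j ∧
        ρ = φ.take j ++ [S.sib j q]) ∨
      ∃ ρ₀, S.OffSpine ρ₀ θ ∧ q ∈ S.fwd ρ₀ θ ∧ ρ = ρ₀ ++ [S.fwdPre ρ₀ θ q] := by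
  constructor
  · intro h
    generalize hθq : θ ++ [q] = θq at h
    cases h with
    | side j y hj hjn hy =>
      obtain ⟨rfl, rfl⟩ := List.append_singleton_inj.1 hθq
      exact .inl ⟨j, hj, hjn, hy, rfl, rfl⟩
    | fwd ρ₀ θ₀ y h hy =>
      obtain ⟨rfl, rfl⟩ := List.append_singleton_inj.1 hθq
      exact .inr ⟨ρ₀, h, hy, rfl⟩
  · rintro (⟨j, hj, hjn, hq, rfl, rfl⟩ | ⟨ρ₀, h, hq, rfl⟩)
    · exact .side j q hj hjn hq
    · exact .fwd ρ₀ θ q h hq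

theorem OffSpine.unique {ρ ρ' θ : List Q} (h : S.OffSpine ρ θ) (h' : S.OffSpine ρ' θ) :
    ρ = ρ' := by
  induction h generalizing ρ' with
  | side j y _ _ _ =>
    rcases offSpine_append_singleton_iff.1 h' with ⟨j', -, -, -, hjj, rfl⟩ | ⟨ρ₀, h₀, -, -⟩
    · obtain rfl := spine_injective _ hjj
      rfl
    · exact absurd rfl (h₀.ne_spine j)
  | fwd ρ θ y h hy ih =>
    rcases offSpine_append_singleton_iff.1 h' with ⟨j', -, -, -, rfl, -⟩ | ⟨ρ₀, h₀, -, rfl⟩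
    · exact absurd rfl (h.ne_spine j')
    · rw [ih h₀]

variable (S) in
def run : Set (List Q) :=
  {θ | (∃ i, 0 < i ∧ i ≤ φ.length ∧ θ = spine S.g i) ∨ ∃ ρ, S.OffSpine ρ θ}

theorem spine_mem_run {i : ℕ} (hi : 0 < i) (hin : i ≤ φ.length) : spine S.g i ∈ S.run :=
  .inl ⟨i, hi, hin, rfl⟩

theorem OffSpine.mem_run {ρ θ : List Q} (h : S.OffSpine ρ θ) : θ ∈ S.run :=
  .inr ⟨ρ, h⟩

theorem append_singleton_mem_run_iff {θ : List Q} {q : Q} :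
    θ ++ [q] ∈ S.run ↔
      (∃ i < φ.length, θ = spine S.g i ∧ q = S.g i) ∨
      (∃ j, 0 < j ∧ j < φ.length ∧ θ = spine S.g j ∧ q ∈ S.R j) ∨
      ∃ ρ, S.OffSpine ρ θ ∧ q ∈ S.fwd ρ θ := by
  constructor
  · rintro (⟨i, hi, hin, hθ⟩ | ⟨ρ, h⟩)
    · obtain ⟨rfl, h₁, h₂⟩ := eq_spine_of_spine_eq_append _ hθ.symm
      exact .inl ⟨θ.length, by omega, h₁, h₂⟩
    · rcases offSpine_append_singleton_iff.1 h with ⟨j, hj, hjn, hq, rfl, -⟩ | ⟨ρ₀, h₀, hq, -⟩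
      · exact .inr (.inl ⟨j, hj, hjn, rfl, hq⟩)
      · exact .inr (.inr ⟨ρ₀, h₀, hq⟩)
  · rintro (⟨i, hi, rfl, rfl⟩ | ⟨j, hj, hjn, rfl, hq⟩ | ⟨ρ, h, hq⟩)
    · rw [← spine_succ]
      exact spine_mem_run i.succ_pos hi
    · exact (OffSpine.side j q hj hjn hq).mem_run
    · exact (OffSpine.fwd ρ θ q h hq).mem_run

theorem succs_run_spine {i : ℕ} (hi : 0 < i) (hin : i < φ.length) :
    succs S.run (spine S.g i) = insert (S.g i) (S.R i) := by
  ext q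
  simp only [succs, Set.mem_setOf_eq, append_singleton_mem_run_iff, Set.mem_insert_iff]
  constructor
  · rintro (⟨i', -, hi', rfl⟩ | ⟨j, -, -, hj, hq⟩ | ⟨ρ, h, -⟩)
    · rw [spine_injective _ hi']
      exact .inl rfl
    · rw [spine_injective _ hj]
      exact .inr hq
    · exact absurd rfl (h.ne_spine i)
  · rintro (rfl | hq)
    · exact .inl ⟨i, hin, rfl, rfl⟩
    · exact .inr (.inl ⟨i, hi, hin, rfl, hq⟩)

theorem succs_run_spine_length : succs S.run (spine S.g φ.length) = ∅ := by
  ext q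
  simp only [succs, Set.mem_setOf_eq, append_singleton_mem_run_iff, Set.mem_empty_iff_false,
    iff_false]
  rintro (⟨i, hi, hi', -⟩ | ⟨j, -, hj, hj', -⟩ | ⟨ρ, h, -⟩)
  · exact hi.ne (spine_injective _ hi').symm
  · exact hj.ne (spine_injective _ hj').symm
  · exact h.ne_spine _ rfl

theorem OffSpine.succs_run {ρ θ : List Q} (h : S.OffSpine ρ θ) : succs S.run θ = S.fwd ρ θ := by
  ext q
  simp only [succs, Set.mem_setOf_eq, append_singleton_mem_run_iff]
  constructor
  · rintro (⟨i, -, rfl, -⟩ | ⟨j, -, -, rfl, -⟩ | ⟨ρ', h', hq⟩)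
    · exact absurd rfl (h.ne_spine i)
    · exact absurd rfl (h.ne_spine j)
    · rwa [h.unique h']
  · exact fun hq => .inr (.inr ⟨ρ, h, hq⟩)

theorem spine_prefix_mem_run {i : ℕ} (hin : i ≤ φ.length) {θ : List Q} (hθ : θ <+: spine S.g i)
    (hθne : θ ≠ []) : θ ∈ S.run := by
  have hlen : θ.length ≤ i := by simpa using hθ.length_le
  rw [List.prefix_iff_eq_take, take_spine, min_eq_left hlen] at hθ
  exact hθ ▸ spine_mem_run (List.length_pos_iff.2 hθne) (hlen.trans hin)

theorem prefix_mem_run {θ : List Q} (hθ : θ ∈ S.run) {θ' : List Q} (hθ' : θ' <+: θ)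
    (hθ'ne : θ' ≠ []) : θ' ∈ S.run := by
  obtain ⟨i, -, hin, rfl⟩ | ⟨ρ, h⟩ := hθ
  · exact spine_prefix_mem_run hin hθ' hθ'ne
  induction h generalizing θ' with
  | side j y hj hjn hy =>
    rcases List.prefix_concat_iff.1 hθ' with rfl | hθ'
    · exact (OffSpine.side j y hj hjn hy).mem_run
    · exact spine_prefix_mem_run hjn.le hθ' hθ'ne
  | fwd ρ θ y h hy ih =>
    rcases List.prefix_concat_iff.1 hθ' with rfl | hθ'
    · exact (OffSpine.fwd ρ θ y h hy).mem_run
    · exact ih hθ' hθ'ne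

theorem isTree_run (hφ : φ ≠ []) : IsTree S.run where
  not_nil := by
    rintro (⟨i, hi, -, h⟩ | ⟨ρ, h⟩)
    · exact hi.ne (by simpa using congrArg List.length h)
    · exact h.ne_nil rfl
  prefix_closed _ hθ _ hθ' hθ'ne := prefix_mem_run hθ hθ' hθ'ne
  root := by
    refine ⟨S.g 0, spine_mem_run one_pos (List.length_pos_iff.2 hφ), fun q hq => ?_⟩
    rcases append_singleton_mem_run_iff.1 (show [] ++ [q] ∈ S.run from hq) with
      ⟨i, -, hi, rfl⟩ | ⟨j, hj, -, hj', -⟩ | ⟨ρ, h, -⟩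
    · rw [← spine_injective S.g (hi.symm.trans rfl : spine S.g i = spine S.g 0)]
    · exact absurd (spine_injective S.g (hj'.symm.trans rfl : spine S.g j = spine S.g 0)) hj.ne'
    · exact absurd rfl h.ne_nil

theorem finite_run [Finite Q] (hV : IsPartialRun A w V) (hφ : φ ∈ V) : S.run.Finite := by
  obtain ⟨D, hD⟩ := (hV.finite.image List.length).bddAbove
  refine (List.finite_length_le Q D).subset ?_
  rintro θ (⟨i, -, hin, rfl⟩ | ⟨ρ, h⟩)
  · simpa using hin.trans (hD ⟨φ, hφ, rfl⟩)
  · simpa [← h.length_eq] using hD ⟨ρ, h.shape.1, rfl⟩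

theorem isPartialRun_run [Finite Q] (hV : IsPartialRun A w V) (hφ : φ ∈ V) :
    IsPartialRun A w S.run := by
  refine ⟨isTree_run (hV.tree.ne_nil_of_mem hφ), finite_run hV hφ, ?_⟩
  rintro θ (⟨i, hi, hin, rfl⟩ | ⟨ρ, h⟩)
  · rcases hin.lt_or_eq with hin | rfl
    · right
      rw [succs_run_spine hi hin, lastSt_spine _ _ hi, length_spine]
      exact S.g_δ i hi hin
    · exact .inl succs_run_spine_length
  · rw [h.succs_run]
    by_cases hδ : succs V ρ ∈ A.δ (lastSt A ρ) (w (ρ.length - 1))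
    · right
      rw [← h.length_eq]
      exact (S.fwd_spec ρ θ hδ h.shape.2.1).1
    · exact .inl (S.fwd_eq_empty ρ θ fun hc => hδ hc.1)

theorem isBranch_run_spine (hφ : φ ≠ []) : IsBranch S.run (spine S.g φ.length) :=
  ⟨spine_mem_run (List.length_pos_iff.2 hφ) le_rfl, succs_run_spine_length⟩

/-- A nonempty set of successors of `ρ` in `V` would be simulated by a transition to `∅`. -/
theorem eq_spine_or_offSpine_of_isBranch_run (hne : A.NoEmpty) (hV : IsPartialRun A w V)
    {θ : List Q} (h : IsBranch S.run θ) :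
    θ = spine S.g φ.length ∨ ∃ ρ, S.OffSpine ρ θ ∧ IsBranch V ρ := by
  obtain ⟨⟨i, hi, hin, rfl⟩ | ⟨ρ, hρ⟩, hsucc⟩ := h
  · rcases hin.lt_or_eq with hin | rfl
    · rw [succs_run_spine hi hin] at hsucc
      exact absurd hsucc (Set.insert_nonempty _ _).ne_empty
    · exact .inl rfl
  · refine .inr ⟨ρ, hρ, hρ.shape.1, Set.eq_empty_of_forall_notMem fun x hx => ?_⟩
    have := (S.fwd_spec ρ θ (hV.succs_mem_δ hρ.shape.1 hx) hρ.shape.2.1).1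
    rw [← hρ.succs_run, hsucc] at this
    exact hne _ _ this

end Surgery

namespace Surgery

variable {A : ABA σ Q} {w : ℕ → σ} {F B : Q → Q → Prop} {V : Set (List Q)} {φ : List Q}
  {S : Surgery A w F B V φ}

theorem forall₂_αle_take_spine (hB : BackwardSim A F B) {j : ℕ} (hj : j ≤ φ.length) :
    List.Forall₂ (αle A) (φ.take j) (spine S.g j) :=
  forall₂_take_spine S.g hj fun i hi => (hB _ _ (S.B_g i hi)).2.1

theorem OffSpine.forall₂_αle (hF : ForwardSim A F) (hB : BackwardSim A F B) {ρ θ : List Q}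
    (h : S.OffSpine ρ θ) : List.Forall₂ (αle A) ρ θ := by
  obtain ⟨-, -, j, x, y, u, v, -, hjn, rfl, rfl, -, -, hxy⟩ := h.shape
  exact List.rel_append (forall₂_αle_take_spine hB hjn.le) (hxy.imp fun a b h => (hF a b h).1)

theorem root_rel (hV : IsTree V) (hφ : φ ∈ V) {p r : Q} (hp : [p] ∈ V) (hr : [r] ∈ S.run) :
    B p r := by
  have hφne := hV.ne_nil_of_mem hφ
  have hn : 0 < φ.length := List.length_pos_iff.2 hφne
  obtain ⟨q, -, hq⟩ := (isTree_run (S := S) hφne).root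
  have hr : r = S.g 0 := (hq r hr).trans (hq _ (spine_mem_run one_pos hn)).symm
  have hp : [p] = [φ[0]] := by
    rw [← hV.take_one_eq hφ hp, List.take_succ_eq_append_getElem hn]
    rfl
  simp only [List.cons.injEq, and_true] at hp
  exact hp ▸ hr ▸ S.B_g 0 hn

theorem setLe_ominus_swT {T : Set (List Q)} {ext : List Q → Q}
    (hne : A.NoEmpty) (hFt : Transitive F) (hF : ForwardSim A F) (hB : BackwardSim A F B)
    (hV : IsPartialRun A w V) (hφ : φ ∈ V) {i : ℕ} (hi : 0 < i) (hin : i < φ.length) :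
    SetLe F (ominus (swT A F ext T V) φ i)
      (ominus (swT A F ext T S.run) (spine S.g φ.length) i) := by
  rintro χ ⟨-, hχhd, hmem, hsucc⟩
  obtain ⟨hθW, hθs⟩ := (isBranch_swT_iff (isTree_run (hV.tree.ne_nil_of_mem hφ))).1
    (⟨hmem, hsucc⟩ : IsBranch _ _)
  rcases eq_spine_or_offSpine_of_isBranch_run hne hV hθW with hsp | ⟨ρ, hρ, hρV⟩
  · refine absurd ?_ hχhd
    rw [List.append_cancel_left (hsp.trans (List.take_append_drop i _).symm), List.head?_drop]
  obtain ⟨-, hFρ, j, x, y, u, v, hj, hjn, rfl, hθ, hx, hy, hxy⟩ := hρ.shape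
  have hjy : (y :: v).head? ≠ (spine S.g φ.length)[j]? := by
    rw [getElem?_spine _ hjn]
    exact fun h => S.g_notMem j hj hjn (Option.some_injective _ h ▸ hy)
  have hθ' : (spine S.g φ.length).take j ++ y :: v = (spine S.g φ.length).take i ++ χ := by
    rw [take_spine, min_eq_left hjn.le, ← hθ]
  obtain rfl : j = i := by
    rw [← commonPrefixLen_take_append (length_spine S.g _ ▸ hjn.le) hjy, hθ',
      commonPrefixLen_take_append (length_spine S.g _ ▸ hin.le) hχhd]
  obtain rfl := List.append_cancel_left hθ'
  refine ⟨x :: u, ⟨List.cons_ne_nil _ _, by simpa [List.getElem?_eq_getElem hjn] using hx, ?_⟩,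
    hxy⟩
  refine (isBranch_swT_iff hV.tree).2 ⟨hρV, fun ⟨π, hπ, hπα, hπF⟩ => hθs ⟨π, hπ, ?_, ?_⟩⟩
  · exact hπα.trans_of_transitive (αle_trans A) (hρ.forall₂_αle hF hB)
  · exact hFt hπF hFρ

end Surgery

section Surgery

variable {A : ABA σ Q} {w : ℕ → σ} {F B M : Q → Q → Prop} {T V : Set (List Q)}
  {ext : List Q → Q}

theorem exists_surgery [Finite Q] (hne : A.NoEmpty) (hFt : Transitive F) (hF : ForwardSim A F)
    (hBt : Transitive B) (hB : BackwardSim A F B) (hM : IsMediated F B M)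
    (hV : IsPartialRun A w V) (hwext : TrWExt A M B ext T V) {φ : List Q}
    (hφ : IsBranch (swT A F ext T V) φ) :
    ∃ W sp, IsPartialRun A w W ∧ TrWExt A M B ext T W ∧ (∀ p r, [p] ∈ V → [r] ∈ W → B p r) ∧
      IsBranch W sp ∧ sp.length = φ.length ∧ ¬ IsBranch (swT A F ext T W) sp ∧
      ∀ i, 0 < i → i < φ.length →
        SetLe F (ominus (swT A F ext T V) φ i) (ominus (swT A F ext T W) sp i) := by
  obtain ⟨hφV, -⟩ := (isBranch_swT_iff hV.tree).1 hφ
  have hφne := hV.tree.ne_nil_of_mem hφV.1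
  obtain ⟨π, hπ, hπφ, hπM⟩ := hwext.1 φ hφV
  obtain ⟨s, hFs, hBs⟩ := hM.mediator _ _ hπM
  obtain ⟨S, hgs⟩ := Surgery.exists_of_chain hF hB hV hφV.1 hBs
  have hπsp : BrExt A F ext π (spine S.g φ.length) := by
    refine ⟨hπφ.trans_of_transitive (αle_trans A) ?_, ?_⟩
    · simpa using Surgery.forall₂_αle_take_spine (S := S) hB le_rfl
    · rwa [lastSt_spine _ _ (List.length_pos_iff.2 hφne), hgs]
  have hroot {p r : Q} (hp : [p] ∈ V) (hr : [r] ∈ S.run) : B p r :=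
    Surgery.root_rel hV.tree hφV.1 hp hr
  refine ⟨S.run, spine S.g φ.length, S.isPartialRun_run hV hφV.1, ⟨?_, ?_⟩,
    fun p r => hroot, Surgery.isBranch_run_spine hφne, length_spine _ _,
    fun h => ((isBranch_swT_iff (Surgery.isTree_run hφne)).1 h).2 ⟨π, hπ, hπsp⟩,
    fun i hi hin => Surgery.setLe_ominus_swT hne hFt hF hB hV hφV.1 hi hin⟩
  · intro θ hθ
    rcases Surgery.eq_spine_or_offSpine_of_isBranch_run hne hV hθ with rfl | ⟨ρ, hρ, hρV⟩
    · exact ⟨π, hπ, hπsp.1, hM.le_f _ _ hπsp.2⟩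
    · obtain ⟨π', hπ', hα, hM'⟩ := hwext.1 ρ hρV
      exact ⟨π', hπ', hα.trans_of_transitive (αle_trans A) (hρ.forall₂_αle hF hB),
        hM.fwd_ext _ _ _ hM' hρ.shape.2.1⟩
  · intro p r hp hr
    obtain ⟨q, hq, -⟩ := hV.tree.root
    exact hBt (hwext.2 p q hp hq) (hroot hq hr)

end Surgery

section Progress

variable {A : ABA σ Q} {w : ℕ → σ} {F B M : Q → Q → Prop} {T V : Set (List Q)}
  {ext : List Q → Q}

theorem ominus_subset_ominus {X : Set (List Q)} {τ τ' : List Q} {i : ℕ}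
    (htake : τ'.take i = τ.take i) (hhead : ∀ χ ∈ ominus X τ' i, χ.head? ≠ τ[i]?) :
    ominus X τ' i ⊆ ominus X τ i :=
  fun χ hχ => ⟨hχ.1, hhead χ hχ, htake ▸ hχ.2.2.1, htake ▸ hχ.2.2.2⟩

theorem finite_ominus {X : Set (List Q)} (hX : X.Finite) (τ : List Q) (i : ℕ) :
    (ominus X τ i).Finite :=
  (hX.preimage (List.append_right_injective (τ.take i)).injOn).subset fun _ hχ => hχ.2.2.1

theorem exists_cons_of_mem_ominus {X : Set (List Q)} (hXV : X ⊆ V) (hV : IsTree V)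
    {τ χ : List Q} {i : ℕ} (hχ : χ ∈ ominus X τ i) :
    ∃ a t, χ = a :: t ∧ a ∈ succs V (τ.take i) := by
  obtain ⟨a, t, rfl⟩ := List.exists_cons_of_ne_nil hχ.1
  exact ⟨a, t, rfl, hV.prefix_closed _ (hXV hχ.2.2.1) _ (by simp) (by simp)⟩

theorem exists_max_commonPrefixLen (hV : IsPartialRun A w V) {τ : List Q} (hτ : τ ∈ V)
    (hτX : ¬ IsBranch (swT A F ext T V) τ) {φ₀ : List Q}
    (hφ₀ : IsBranch (swT A F ext T V) φ₀) :
    ∃ c, 0 < c ∧ c ≤ τ.length ∧ (ominus (swT A F ext T V) τ c).Nonempty ∧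
      ∀ φ, IsBranch (swT A F ext T V) φ → commonPrefixLen φ τ ≤ c := by
  obtain ⟨φ, hφ, hmax⟩ := Set.Finite.exists_maximalFor (fun φ => commonPrefixLen φ τ)
    {φ | IsBranch (swT A F ext T V) φ}
    (hV.finite.subset fun φ h => swT_subset hV.tree h.1) ⟨φ₀, hφ₀⟩
  obtain ⟨hc, hmem⟩ := hφ.drop_mem_ominus_swT hV.tree hτ hτX
  refine ⟨_, hc, commonPrefixLen_le_right φ τ, ⟨_, hmem⟩, fun φ' hφ' => ?_⟩
  by_contra! hlt
  exact hlt.not_ge (hmax hφ' hlt.le)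

theorem head?_ne_of_commonPrefixLen_le {τ χ : List Q} {c : ℕ} (hχ : χ ≠ [])
    (hcτ : c ≤ τ.length) (hmax : commonPrefixLen (τ.take c ++ χ) τ ≤ c) :
    χ.head? ≠ τ[c]? := by
  intro heq
  have hlen : (τ.take c).length = c := by simp [hcτ]
  have hcτ' : c < τ.length := by
    by_contra h
    rw [List.getElem?_eq_none (by omega), List.head?_eq_none_iff] at heq
    exact hχ heq
  have := le_commonPrefixLen (j := c + 1) (l := τ.take c ++ χ) (l' := τ)
    (by simpa [hlen, Nat.one_le_iff_ne_zero] using hχ) hcτ' <| by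
    rw [List.take_succ, List.take_left' hlen, List.getElem?_append_right hlen.le, hlen,
      Nat.sub_self, ← List.head?_eq_getElem?, heq, List.take_succ]
  omega

theorem ominus_take_append_subset {X : Set (List Q)} {τ χ : List Q} {c : ℕ}
    (hcτ : c ≤ τ.length) (hmax : ∀ φ, IsBranch X φ → commonPrefixLen φ τ ≤ c) {i : ℕ}
    (hic : i ≤ c) : ominus X (τ.take c ++ χ) i ⊆ ominus X τ i := by
  have hlen : (τ.take c).length = c := by simp [hcτ]
  have hc : (τ.take c ++ χ).take c = τ.take c := List.take_left' hlen
  have htake : (τ.take c ++ χ).take i = τ.take i := by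
    rw [← min_eq_left hic, ← List.take_take, hc, List.take_take]
  refine ominus_subset_ominus htake fun χ' hχ' => ?_
  rcases hic.lt_or_eq with hic | rfl
  · have := congrArg (·[i]?) hc
    simp only [List.getElem?_take, hic, if_true] at this
    exact this ▸ hχ'.2.1
  · exact head?_ne_of_commonPrefixLen_le hχ'.1 hcτ (hmax _ (htake ▸ hχ'.2.2))

/-- Let `c` be the largest depth at which a strict branch leaves `τ`, and `χ` a `≼_F`-minimal
tail of such a branch `φ = τ^c χ`. Surgery along `φ` leaves the components `< c` of
`⟨τ, sw_T(V)⟩` at least as large, and makes component `c` strictly larger: otherwise another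
tail at depth `c` would be `≼_F`-equivalent to `χ` with a different head, contradicting
unambiguity. -/
theorem exists_seqLt_of_mem [Finite Q] (hne : A.NoEmpty) (hFr : Reflexive F)
    (hFt : Transitive F) (hF : ForwardSim A F) (hunamb : Unambiguous A F) (hBt : Transitive B)
    (hB : BackwardSim A F B) (hM : IsMediated F B M) (hV : IsPartialRun A w V)
    (hwext : TrWExt A M B ext T V) {τ : List Q} (hτ : τ ∈ V)
    (hτX : ¬ IsBranch (swT A F ext T V) τ) {φ₀ : List Q} (hφ₀ : IsBranch (swT A F ext T V) φ₀) :
    ∃ W τW, IsPartialRun A w W ∧ TrWExt A M B ext T W ∧ (∀ p r, [p] ∈ V → [r] ∈ W → B p r) ∧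
      τW ∈ W ∧ ¬ IsBranch (swT A F ext T W) τW ∧
      SeqLt F (seqOf (swT A F ext T V) τ) (seqOf (swT A F ext T W) τW) := by
  set X := swT A F ext T V
  have hXV : X ⊆ V := swT_subset hV.tree
  obtain ⟨c, hc, hcτ, hXc, hmax⟩ := exists_max_commonPrefixLen hV hτ hτX hφ₀
  obtain ⟨χ, hχ, hχmin⟩ := (finite_ominus (hV.finite.subset hXV) τ c).exists_minimal_of_preorder
    (fun l => List.forall₂_same.2 fun x _ => hFr x)
    (fun _ _ _ h₁ h₂ => h₁.trans_of_transitive hFt h₂) hXc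
  obtain ⟨φ, hφ⟩ : ∃ φ, φ = τ.take c ++ χ := ⟨_, rfl⟩
  have hlen : (τ.take c).length = c := by simp [hcτ]
  have hφc : φ.take c = τ.take c := hφ ▸ List.take_left' hlen
  have hsub {i : ℕ} (hic : i ≤ c) : ominus X φ i ⊆ ominus X τ i :=
    hφ ▸ ominus_take_append_subset hcτ hmax hic
  obtain ⟨W, sp, hW, hWT, hroot, hsp, hsplen, hspX, hle⟩ :=
    exists_surgery hne hFt hF hBt hB hM hV hwext (hφ ▸ hχ.2.2 : IsBranch X φ)
  have hφlen : c < φ.length := by simp [hφ, hlen, List.length_pos_iff.2 hχ.1]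
  have hτne : τ ≠ [] := hV.tree.ne_nil_of_mem hτ
  have hspne : sp ≠ [] := by rintro rfl; simp at hsplen; omega
  refine ⟨W, sp, hW, hWT, hroot, hsp.1, hspX, c - 1, ?_, ?_, fun j hj => ?_⟩
  · rw [seqOf_length hτne, seqOf_length hspne, hsplen]
    omega
  · rw [seqOf_getD hτne (by omega), seqOf_getD hspne (by omega), Nat.sub_add_cancel hc]
    refine ⟨(hle c hc hφlen).mono_left (hsub le_rfl), fun hge => ?_⟩
    obtain ⟨χ', hχ', hχ'χ⟩ := hge χ hχ
    obtain ⟨u, hu, huχ'⟩ := hle c hc hφlen χ' hχ'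
    have huχ := huχ'.trans_of_transitive hFt hχ'χ
    have hχu := hχmin u (hsub le_rfl hu) huχ
    obtain ⟨a, t, rfl, ha⟩ := exists_cons_of_mem_ominus hXV hV.tree hu
    obtain ⟨b, t', rfl, hb⟩ := exists_cons_of_mem_ominus hXV hV.tree hχ
    rw [hφc] at ha
    have hab : a ≠ b := fun h => hu.2.1 <| by
      simp [hφ, h, hlen]
    exact hunamb _ _ _ (hV.succs_mem_δ (hV.tree.take_mem hτ hc) hb) a ha b hb hab
      ⟨(List.forall₂_cons.1 huχ).1, (List.forall₂_cons.1 hχu).1⟩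
  · rw [seqOf_getD hτne (by omega), seqOf_getD hspne (by omega)]
    exact (hle (j + 1) j.succ_pos (by omega)).mono_left (hsub (by omega))

end Progress

def boundedSeqs (D : ℕ) : Set (List (Set (List Q))) :=
  {L | L.length ≤ D ∧ ∀ P ∈ L, P ⊆ {l | l.length ≤ D}}

theorem finite_boundedSeqs [Finite Q] (D : ℕ) : (boundedSeqs (Q := Q) D).Finite := by
  have := ((List.finite_length_le Q D).powerset).to_subtype
  refine ((List.finite_length_le (𝒫 {l : List Q | l.length ≤ D}) D).image
    (List.map Subtype.val)).subset ?_
  rintro L ⟨hL, hmem⟩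
  exact ⟨L.attachWith _ hmem, (List.length_attachWith ..).trans_le hL,
    List.unattach_attachWith⟩

section Termination

variable {A : ABA σ Q} {w : ℕ → σ} {F B M : Q → Q → Prop} {T V : Set (List Q)}
  {ext : List Q → Q}

theorem exists_isBranch_swT_of_mem (hV : IsTree V) {ρ : List Q} (hρ : ρ ∈ swT A F ext T V) :
    ∃ ψ, IsBranch (swT A F ext T V) ψ :=
  let ⟨_, ψ, hψ, hψs, _⟩ := hρ
  ⟨ψ, (isBranch_swT_iff hV).2 ⟨hψ, hψs⟩⟩

theorem length_le_of_trWExt (hV : IsPartialRun A w V) (hwext : TrWExt A M B ext T V) {D : ℕ}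
    (hD : D ∈ upperBounds (List.length '' T)) {θ : List Q} (hθ : θ ∈ V) : θ.length ≤ D := by
  obtain ⟨ψ, hθψ, hψ⟩ := exists_isBranch_of_finite hV.finite hθ
  obtain ⟨π, hπ, hα, -⟩ := hwext.1 ψ hψ
  calc θ.length ≤ ψ.length := hθψ.length_le
    _ = π.length := hα.length_eq.symm
    _ ≤ D := hD ⟨π, hπ.1, rfl⟩

theorem seqOf_swT_mem (hV : IsPartialRun A w V) (hwext : TrWExt A M B ext T V) {D : ℕ}
    (hD : D ∈ upperBounds (List.length '' T)) {τ : List Q} (hτ : τ ∈ V) :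
    seqOf (swT A F ext T V) τ ∈ boundedSeqs D := by
  have hτne := hV.tree.ne_nil_of_mem hτ
  refine ⟨seqOf_length hτne ▸ length_le_of_trWExt hV hwext hD hτ, ?_⟩
  obtain _ | ⟨a, t⟩ := τ
  · exact absurd rfl hτne
  simp only [seqOf, List.mem_map, List.mem_range]
  rintro _ ⟨i, -, rfl⟩ χ hχ
  have := length_le_of_trWExt hV hwext hD (swT_subset hV.tree hχ.2.2.1)
  simp only [List.length_append] at this
  exact le_of_add_le_right this

theorem exists_swT_eq_empty [Finite Q] (hne : A.NoEmpty) (hFr : Reflexive F)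
    (hFt : Transitive F) (hF : ForwardSim A F) (hunamb : Unambiguous A F) (hBr : Reflexive B)
    (hBt : Transitive B) (hB : BackwardSim A F B) (hM : IsMediated F B M)
    (hT : IsPartialRun A w T) (hV : IsPartialRun A w V) (hwext : TrWExt A M B ext T V)
    {τ : List Q} (hτ : τ ∈ V) (hτX : ¬ IsBranch (swT A F ext T V) τ) :
    ∃ W, IsPartialRun A w W ∧ TrWExt A M B ext T W ∧ (∀ p r, [p] ∈ V → [r] ∈ W → B p r) ∧
      swT A F ext T W = ∅ := by
  obtain ⟨D, hD⟩ := (hT.finite.image List.length).bddAbove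
  have : IsStrictOrder _ (flip (SeqLt F)) :=
    { irrefl := seqLt_irrefl hFr, trans := fun _ _ _ h₁ h₂ => h₂.trans hFt h₁ }
  suffices h : ∀ S ∈ boundedSeqs D,
      ∀ V τ, IsPartialRun A w V → TrWExt A M B ext T V → τ ∈ V →
        ¬ IsBranch (swT A F ext T V) τ → seqOf (swT A F ext T V) τ = S →
        ∃ W, IsPartialRun A w W ∧ TrWExt A M B ext T W ∧
          (∀ p r, [p] ∈ V → [r] ∈ W → B p r) ∧ swT A F ext T W = ∅ from
    h _ (seqOf_swT_mem hV hwext hD hτ) V τ hV hwext hτ hτX rfl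
  intro S hS
  apply ((finite_boundedSeqs D).wellFoundedOn (r := flip (SeqLt F))).induction hS
  intro S _ ih V τ hV hwext hτ hτX hS
  by_cases hX : ∃ φ, IsBranch (swT A F ext T V) φ
  · obtain ⟨φ, hφ⟩ := hX
    obtain ⟨W₁, τ₁, hW₁, hW₁T, hroot₁, hτ₁, hτ₁X, hlt⟩ :=
      exists_seqLt_of_mem hne hFr hFt hF hunamb hBt hB hM hV hwext hτ hτX hφ
    obtain ⟨W, hW, hWT, hroot, hWX⟩ := ih _ (seqOf_swT_mem hW₁ hW₁T hD hτ₁) (hS ▸ hlt)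
      W₁ τ₁ hW₁ hW₁T hτ₁ hτ₁X rfl
    refine ⟨W, hW, hWT, fun p r hp hr => ?_, hWX⟩
    obtain ⟨q, hq, -⟩ := hW₁.tree.root
    exact hBt (hroot₁ p q hp hq) (hroot q r hq hr)
  · refine ⟨V, hV, hwext, fun p r hp hr => ?_,
      Set.eq_empty_of_forall_notMem fun ρ hρ => hX (exists_isBranch_swT_of_mem hV.tree hρ)⟩
    obtain ⟨q, -, hq⟩ := hV.tree.root
    rw [hq p hp, hq r hr]
    exact hBr q

end Termination

section Root

variable {A : ABA σ Q} {w : ℕ → σ} {F B M : Q → Q → Prop} {T V : Set (List Q)}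
  {ext : List Q → Q}

theorem ominus_length_eq_empty {X W : Set (List Q)} (hW : IsTree W) (hXW : X ⊆ W) {sp : List Q}
    (hsp : IsBranch W sp) : ominus X sp sp.length = ∅ := by
  refine Set.eq_empty_of_forall_notMem fun χ hχ => ?_
  obtain ⟨a, t, rfl, ha⟩ := exists_cons_of_mem_ominus hXW hW hχ
  rw [List.take_length, hsp.2] at ha
  exact ha

theorem seqLt_seqOf_nil {X Y : Set (List Q)} {φ τ : List Q} (hφ : IsBranch X φ) (hτ : τ ≠ [])
    (hY : ominus Y τ 1 = ∅) : SeqLt F (seqOf X []) (seqOf Y τ) := by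
  refine ⟨0, ?_, ?_, by simp⟩
  · rw [seqOf_length hτ]
    simpa [seqOf] using List.length_pos_iff.2 hτ
  rw [seqOf_getD hτ (List.length_pos_iff.2 hτ), hY]
  exact ⟨fun _ h => h.elim, fun h => by simpa using h φ hφ⟩

theorem exists_ominus_one_eq_empty [Finite Q] (hne : A.NoEmpty) (hFr : Reflexive F)
    (hFt : Transitive F) (hF : ForwardSim A F) (hunamb : Unambiguous A F) (hBr : Reflexive B)
    (hBt : Transitive B) (hB : BackwardSim A F B) (hM : IsMediated F B M)
    (hT : IsPartialRun A w T) (hV : IsPartialRun A w V) (hwext : TrWExt A M B ext T V) :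
    ∃ W τW, IsPartialRun A w W ∧ TrWExt A M B ext T W ∧ (∀ p r, [p] ∈ V → [r] ∈ W → B p r) ∧
      τW ∈ W ∧ ¬ IsBranch (swT A F ext T W) τW ∧ τW ≠ [] ∧
      ominus (swT A F ext T W) τW 1 = ∅ := by
  obtain ⟨p, hp, -⟩ := hV.tree.root
  by_cases hpX : IsBranch (swT A F ext T V) [p]
  · obtain ⟨W, sp, hW, hWT, hroot, hsp, hsplen, hspX, -⟩ :=
      exists_surgery hne hFt hF hBt hB hM hV hwext hpX
    refine ⟨W, sp, hW, hWT, hroot, hsp.1, hspX, hW.tree.ne_nil_of_mem hsp.1, ?_⟩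
    rw [show 1 = sp.length by simpa using hsplen.symm]
    exact ominus_length_eq_empty hW.tree (swT_subset hW.tree) hsp
  · obtain ⟨W, hW, hWT, hroot, hWX⟩ :=
      exists_swT_eq_empty hne hFr hFt hF hunamb hBr hBt hB hM hT hV hwext hp hpX
    obtain ⟨r, hr, -⟩ := hW.tree.root
    refine ⟨W, [r], hW, hWT, hroot, hr, fun h => ?_, List.cons_ne_nil _ _, ?_⟩
    · simpa [hWX] using h.1
    · exact Set.eq_empty_of_forall_notMem fun χ hχ => by simpa [hWX] using hχ.2.2.1

end Root

theorem stmt_12_general [Finite Q] (A : ABA σ Q) (hne : A.NoEmpty)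
    (F B M : Q → Q → Prop)
    (hFr : Reflexive F) (hFt : Transitive F) (hF : ForwardSim A F)
    (hunamb : Unambiguous A F)
    (hBr : Reflexive B) (hBt : Transitive B) (hB : BackwardSim A F B)
    (hM : IsMediated F B M)
    (w : ℕ → σ) (T : Set (List Q)) (hT : IsPartialRun A w T)
    (ext : List Q → Q)
    (V : Set (List Q)) (hV : IsPartialRun A w V)
    (hwext : TrWExt A M B ext T V) (hnext : ¬ TrExt A F B ext T V)
    (τV : List Q) (hτV : τV ∈ V ∨ τV = [])
    (hτVb : ¬ IsBranch (swT A F ext T V) τV) :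
    ∃ (W : Set (List Q)) (τW : List Q),
      IsPartialRun A w W ∧ TrWExt A M B ext T W ∧
      τW ∈ W ∧ ¬ IsBranch (swT A F ext T W) τW ∧
      (∀ p r, [p] ∈ V → [r] ∈ W → B p r) ∧
      SeqLt F (seqOf (swT A F ext T V) τV) (seqOf (swT A F ext T W) τW) := by
  obtain ⟨φ₀, hφ₀⟩ : ∃ φ₀, IsBranch (swT A F ext T V) φ₀ := by
    by_contra! h
    refine hnext ⟨fun ψ hψ => ?_, hwext.2⟩
    by_contra hψs
    exact h ψ ((isBranch_swT_iff hV.tree).2 ⟨hψ, hψs⟩)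
  rcases hτV with hτV | rfl
  · obtain ⟨W, τW, hW, hWT, hroot, hτW, hτWX, hlt⟩ :=
      exists_seqLt_of_mem hne hFr hFt hF hunamb hBt hB hM hV hwext hτV hτVb hφ₀
    exact ⟨W, τW, hW, hWT, hτW, hτWX, hroot, hlt⟩
  · obtain ⟨W, τW, hW, hWT, hroot, hτW, hτWX, hτWne, hempty⟩ :=
      exists_ominus_one_eq_empty hne hFr hFt hF hunamb hBr hBt hB hM hT hV hwext
    exact ⟨W, τW, hW, hWT, hτW, hτWX, hroot, seqLt_seqOf_nil hφ₀ hτWne hempty⟩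

/-- The progress lemma: if `V` weakly but not strongly covers `T` w.r.t. `ext`, and
`τ_V ∈ V ∪ {ε}` is not a branch of `sw_T(V)`, then there are a partial run `W` weakly
covering `T` and a path `τ_W ∈ W` not a branch of `sw_T(W)` such that `W` covers `T`
more strongly than `V` w.r.t. `τ_V, τ_W`, i.e. `root(V) ≼_B root(W)` and
`⟨τ_V, sw_T(V)⟩ ⊏ ⟨τ_W, sw_T(W)⟩`. -/
theorem stmt_12 [Finite σ] [Finite Q] (A : ABA σ Q) (hne : A.NoEmpty)
    (F B M : Q → Q → Prop)
    (hFr : Reflexive F) (hFt : Transitive F) (hF : ForwardSim A F)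
    (hunamb : Unambiguous A F)
    (hBr : Reflexive B) (hBt : Transitive B) (hB : BackwardSim A F B)
    (hM : IsMediated F B M)
    (w : ℕ → σ) (T : Set (List Q)) (hT : IsPartialRun A w T)
    (ext : List Q → Q) (hext : IsExtFun A M T ext)
    (V : Set (List Q)) (hV : IsPartialRun A w V)
    (hwext : TrWExt A M B ext T V) (hnext : ¬ TrExt A F B ext T V)
    (τV : List Q) (hτV : τV ∈ V ∨ τV = [])
    (hτVb : ¬ IsBranch (swT A F ext T V) τV) :
    ∃ (W : Set (List Q)) (τW : List Q),
      IsPartialRun A w W ∧ TrWExt A M B ext T W ∧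
      τW ∈ W ∧ ¬ IsBranch (swT A F ext T W) τW ∧
      (∀ p r, [p] ∈ V → [r] ∈ W → B p r) ∧
      SeqLt F (seqOf (swT A F ext T V) τV) (seqOf (swT A F ext T W) τW) :=
  stmt_12_general A hne F B M hFr hFt hF hunamb hBr hBt hB hM w T hT ext V hV hwext hnext τV hτV
    hτVb
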